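/- Let δ, γ be nonzero ordinals, τ an ordinal, and Σ = ⟨S_β : β < τ⟩ a partition of δ*. For every X ∈ I^{Σ,γ} with X ≠ L^{δ,γ} there exists x ∈ L^{δ,γ} with X ⊆ L^{δ,γ}_x, and hence X ∈ I^{Σ,γ}_x; in other words, I^{Σ,γ} = ⋃_{x∈L^{δ,γ}} I^{Σ,γ}_x ∪ {L^{δ,γ}}. -/

import Mathlib

open Ordinal Cardinal

abbrev SOrd : Type 1 := Ordinalᵒᵈ ⊕ₗ Ordinal

namespace SOrd
def neg (α : Ordinal) : SOrd := toLex (Sum.inl (OrderDual.toDual α))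
def pos (α : Ordinal) : SOrd := toLex (Sum.inr α)
def IsPos (a : SOrd) : Prop := ∃ α : Ordinal, a = pos α
def val (a : SOrd) : Ordinal := Sum.elim (fun b => OrderDual.ofDual b) id (ofLex a)
end SOrd

def IsBetween (δ : Ordinal) (a : SOrd) : Prop := SOrd.neg δ < a ∧ a < SOrd.pos δ

def Lset (δ γ : Ordinal) : Set (List SOrd) :=
  {x | x ≠ [] ∧ (∃ h : 0 < x.length, ∃ α < γ, x[0]'h = SOrd.pos α) ∧
    ∀ k, ∀ h : k < x.length, 0 < k → IsBetween δ (x[k]'h)}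

def Llt (x y : List SOrd) : Prop :=
  (∃ k, ∃ hx : k < x.length, ∃ hy : k < y.length,
      x.take k = y.take k ∧ x[k]'hx < y[k]'hy) ∨
  (∃ hy : x.length < y.length, y.take x.length = x ∧ SOrd.IsPos (y[x.length]'hy)) ∨
  (∃ hx : y.length < x.length, x.take y.length = y ∧ ¬ SOrd.IsPos (x[y.length]'hx))

/-- `S` (as the indexed family `⟨S β : β < τ⟩`, where each `ξ ∈ S β` codes the
negative ordinal `ξ*`) is a partition of `δ*`. -/
def IsPartition (δ τ : Ordinal) (S : Ordinal → Set Ordinal) : Prop :=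
  (∀ β, S β ⊆ Set.Iio δ) ∧ (∀ β, τ ≤ β → S β = ∅) ∧ (∀ ξ, ξ < δ → ∃! β, ξ ∈ S β)

/-- `β^Σ(ξ*)`: the index of the piece of the partition containing `ξ*`. -/
noncomputable def colorOf (S : Ordinal → Set Ordinal) (ξ : Ordinal) : Ordinal :=
  sInf {β | ξ ∈ S β}

/-- The index set `r_x`. -/
def rIdx (τ : Ordinal) (x : List SOrd) : Set ℕ :=
  {i | ∃ h : i < x.length, 2 ≤ i ∧ i % 2 = 0 ∧ x[i]'h < SOrd.pos τ}

/-- `Σ`-relevant sequences. -/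
def Relevant (δ γ τ : Ordinal) (S : Ordinal → Set Ordinal) (x : List SOrd) : Prop :=
  x ∈ Lset δ γ ∧ 3 ≤ x.length ∧ x.length % 2 = 1 ∧
  (∀ i, ∀ h : i < x.length, (SOrd.IsPos (x[i]'h) ↔ i % 2 = 0)) ∧
  (∀ i ∈ rIdx τ x, ∀ j ∈ rIdx τ x, i < j →
    ∀ (hi : i - 1 < x.length) (hj : j - 1 < x.length),
      colorOf S (x[j-1]'hj).val < colorOf S (x[i-1]'hi).val) ∧
  x.length - 1 ∈ rIdx τ x

/-- `J^{Σ,γ}_x = {z ∈ L^{δ,γ} : x↾(|x|-1) ≤ z < x}`. -/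
def Jset (δ γ : Ordinal) (x : List SOrd) : Set (List SOrd) :=
  {z ∈ Lset δ γ | (z = x.take (x.length - 1) ∨ Llt (x.take (x.length - 1)) z) ∧ Llt z x}

/-- The initial segment `L^{δ,γ}_α = {z : z < ⟨α⟩}` (equal to `L^{δ,γ}` when `α = γ`). -/
def Lbelow (δ γ α : Ordinal) : Set (List SOrd) :=
  {z ∈ Lset δ γ | Llt z [SOrd.pos α]}

/-- `L^{δ,γ}_x = {z ∈ L^{δ,γ} : z < x}`. -/
def Lx (δ γ : Ordinal) (x : List SOrd) : Set (List SOrd) :=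
  {z ∈ Lset δ γ | Llt z x}

/-- The basic sets of `I^{Σ,γ}`. -/
def IsBasic (δ γ τ : Ordinal) (S : Ordinal → Set Ordinal) (B : Set (List SOrd)) : Prop :=
  (∃ α ≤ γ, B = Lbelow δ γ α) ∨
  (∃ x, Relevant δ γ τ S x ∧ B = Jset δ γ x) ∨
  (∃ z ∈ Lset δ γ, B = ({z} : Set (List SOrd)))

/-- `I^{Σ,γ}`: finite unions of basic sets. -/
def Ifam (δ γ τ : Ordinal) (S : Ordinal → Set Ordinal) : Set (Set (List SOrd)) :=
  {A | ∃ E : Finset (Set (List SOrd)), (∀ B ∈ E, IsBasic δ γ τ S B) ∧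
    A = ⋃ B ∈ E, (B : Set (List SOrd))}

/-- `I^{Σ,γ}_x = {A ⊆ L^{δ,γ}_x : A ∈ I^{Σ,γ}}`. -/
def Ix (δ γ τ : Ordinal) (S : Ordinal → Set Ordinal) (x : List SOrd) : Set (Set (List SOrd)) :=
  {A | A ⊆ Lx δ γ x ∧ A ∈ Ifam δ γ τ S}

/-!
`Llt` is a strict linear order: coding `z` as `z.map succPos ++ [pos 0]` turns it into the
lexicographic order of lists. Hence finitely many sets, each bounded above by a point of
`L^{δ,γ}`, have a common bound. Every basic set except `L^{δ,γ}` itself is bounded: `L_α` by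
`⟨α⟩` for `α < γ`, `J_x` by `x`, and `{z}` by `z⌢⟨0⟩` (an element of `L^{δ,γ}` as `0 < δ`);
and a finite union of basic sets that is not all of `L^{δ,γ}` has no component `L^{δ,γ}`.
-/

namespace SOrd

lemma neg_or_pos (a : SOrd) : (∃ ξ, a = neg ξ) ∨ ∃ α, a = pos α := by
  rcases a with ⟨ξ⟩ | α
  · exact Or.inl ⟨OrderDual.ofDual ξ, rfl⟩
  · exact Or.inr ⟨α, rfl⟩

lemma neg_lt_pos (ξ α : Ordinal) : neg ξ < pos α := Sum.Lex.inl_lt_inr _ _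

@[simp] lemma pos_lt_pos_iff {α β : Ordinal} : pos α < pos β ↔ α < β := Sum.Lex.inr_lt_inr_iff

@[simp] lemma neg_lt_neg_iff {ξ η : Ordinal} : neg ξ < neg η ↔ η < ξ := Sum.Lex.inl_lt_inl_iff

lemma not_pos_lt_neg (α ξ : Ordinal) : ¬ pos α < neg ξ := Sum.Lex.not_inr_lt_inl

lemma isPos_pos (α : Ordinal) : IsPos (pos α) := ⟨α, rfl⟩

lemma not_isPos_neg (ξ : Ordinal) : ¬ IsPos (neg ξ) := by
  rintro ⟨α, h⟩
  cases h

noncomputable def succPos (a : SOrd) : SOrd :=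
  Sum.elim (fun b => neg (OrderDual.ofDual b)) (fun α => pos (α + 1)) (ofLex a)

@[simp] lemma succPos_neg (ξ : Ordinal) : succPos (neg ξ) = neg ξ := rfl

@[simp] lemma succPos_pos (α : Ordinal) : succPos (pos α) = pos (α + 1) := rfl

lemma succPos_strictMono : StrictMono succPos := by
  intro a b hab
  rcases neg_or_pos a with ⟨ξ, rfl⟩ | ⟨α, rfl⟩ <;> rcases neg_or_pos b with ⟨η, rfl⟩ | ⟨β, rfl⟩
  · simpa using hab
  · exact neg_lt_pos _ _
  · exact absurd hab (not_pos_lt_neg _ _)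
  · simpa using hab

end SOrd

lemma List.take_eq_take_iff_getElem_eq {α : Type*} {l₁ l₂ : List α} {k : ℕ}
    (h₁ : k ≤ l₁.length) (h₂ : k ≤ l₂.length) :
    l₁.take k = l₂.take k ↔ ∀ j (hj : j < k), l₁[j] = l₂[j] := by
  rw [List.ext_getElem_iff]
  simp only [List.length_take, List.getElem_take]
  constructor
  · exact fun h j hj => h.2 j (by omega) (by omega)
  · exact fun h => ⟨by omega, fun j hj _ => h j (by omega)⟩

lemma List.lt_of_take_eq_of_getElem_lt {α : Type*} [LT α] {l₁ l₂ : List α} {k : ℕ}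
    (h₁ : k < l₁.length) (h₂ : k < l₂.length) (htake : l₁.take k = l₂.take k)
    (hlt : l₁[k] < l₂[k]) : l₁ < l₂ :=
  List.lt_iff_exists.mpr <| Or.inr
    ⟨k, h₁, h₂, (List.take_eq_take_iff_getElem_eq h₁.le h₂.le).mp htake, hlt⟩

lemma llt_of_take_eq_of_getElem_lt {a b : List SOrd} {k : ℕ} (ha : k < a.length)
    (hb : k < b.length) (htake : a.take k = b.take k) (hlt : a[k] < b[k]) : Llt a b :=
  Or.inl ⟨k, ha, hb, htake, hlt⟩

lemma llt_or_llt_of_take_eq {a b : List SOrd} (hab : a.length < b.length)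
    (htake : b.take a.length = a) : Llt a b ∨ Llt b a := by
  rcases SOrd.neg_or_pos b[a.length] with ⟨ξ, hξ⟩ | ⟨α, hα⟩
  · exact Or.inr (Or.inr (Or.inr ⟨hab, htake, hξ ▸ SOrd.not_isPos_neg ξ⟩))
  · exact Or.inl (Or.inr (Or.inl ⟨hab, htake, hα ▸ SOrd.isPos_pos α⟩))

lemma llt_or_llt_of_lt {a b : List SOrd} (h : a < b) : Llt a b ∨ Llt b a := by
  rcases List.lt_iff_exists.mp h with ⟨hprefix, hlen⟩ | ⟨k, ha, hb, hpre, hlt⟩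
  · exact llt_or_llt_of_take_eq hlen hprefix.symm
  · exact Or.inl (llt_of_take_eq_of_getElem_lt ha hb
      ((List.take_eq_take_iff_getElem_eq ha.le hb.le).mpr hpre) hlt)

lemma llt_trichotomous (a b : List SOrd) : Llt a b ∨ a = b ∨ Llt b a := by
  rcases lt_trichotomy a b with h | rfl | h
  · rcases llt_or_llt_of_lt h with h | h
    exacts [Or.inl h, Or.inr (Or.inr h)]
  · exact Or.inr (Or.inl rfl)
  · rcases llt_or_llt_of_lt h with h | h
    exacts [Or.inr (Or.inr h), Or.inl h]

/-- The final `pos 0` lies above every negative and below every `succPos`-shifted positive entry. -/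
noncomputable def lltCode (z : List SOrd) : List SOrd := z.map SOrd.succPos ++ [SOrd.pos 0]

lemma take_lltCode {z : List SOrd} {k : ℕ} (hk : k ≤ z.length) :
    (lltCode z).take k = (z.take k).map SOrd.succPos := by
  rw [lltCode, List.take_append_of_le_length (by simpa using hk), List.map_take]

lemma getElem_lltCode {z : List SOrd} {k : ℕ} (hk : k < z.length) :
    (lltCode z)[k]'(by simp [lltCode]; omega) = SOrd.succPos z[k] := by
  simp [lltCode, List.getElem_append_left, hk]

lemma getElem_lltCode_length (z : List SOrd) :
    (lltCode z)[z.length]'(by simp [lltCode]) = SOrd.pos 0 := by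
  simp [lltCode]

lemma lltCode_lt_lltCode {a b : List SOrd} (h : Llt a b) : lltCode a < lltCode b := by
  rcases h with ⟨k, ha, hb, htake, hlt⟩ | ⟨hab, htake, α, hα⟩ | ⟨hba, htake, hneg⟩
  · refine List.lt_of_take_eq_of_getElem_lt (k := k) (by simp [lltCode]; omega)
      (by simp [lltCode]; omega) ?_ ?_
    · rw [take_lltCode ha.le, take_lltCode hb.le, htake]
    · rw [getElem_lltCode ha, getElem_lltCode hb]
      exact SOrd.succPos_strictMono hlt
  · refine List.lt_of_take_eq_of_getElem_lt (k := a.length) (by simp [lltCode])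
      (by simp [lltCode]; omega) ?_ ?_
    · rw [take_lltCode le_rfl, take_lltCode hab.le, htake, List.take_length]
    · rw [getElem_lltCode_length, getElem_lltCode hab, hα, SOrd.succPos_pos,
        SOrd.pos_lt_pos_iff]
      exact Order.lt_add_one_iff.mpr bot_le
  · obtain ⟨ξ, hξ⟩ := (SOrd.neg_or_pos a[b.length]).resolve_right
      (fun ⟨α, hα⟩ => hneg ⟨α, hα⟩)
    refine List.lt_of_take_eq_of_getElem_lt (k := b.length) (by simp [lltCode]; omega)
      (by simp [lltCode]) ?_ ?_
    · rw [take_lltCode hba.le, take_lltCode le_rfl, htake, List.take_length]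
    · rw [getElem_lltCode_length, getElem_lltCode hba, hξ, SOrd.succPos_neg]
      exact SOrd.neg_lt_pos _ _

lemma llt_iff_lltCode_lt {a b : List SOrd} : Llt a b ↔ lltCode a < lltCode b := by
  refine ⟨lltCode_lt_lltCode, fun h => ?_⟩
  rcases llt_trichotomous a b with hab | rfl | hba
  · exact hab
  · exact absurd h (lt_irrefl _)
  · exact absurd h (lltCode_lt_lltCode hba).asymm

instance : IsStrictTotalOrder (List SOrd) Llt where
  trichotomous a b h₁ h₂ := ((llt_trichotomous a b).resolve_left h₁).resolve_right h₂
  irrefl _ h := lt_irrefl _ (llt_iff_lltCode_lt.mp h)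
  trans _ _ _ h₁ h₂ := llt_iff_lltCode_lt.mpr
    ((llt_iff_lltCode_lt.mp h₁).trans (llt_iff_lltCode_lt.mp h₂))

lemma exists_rel_bound_biUnion {α : Type*} {r : α → α → Prop} [IsTrans α r] [Std.Trichotomous r]
    {L : Set α} (hL : L.Nonempty) (E : Finset (Set α))
    (hE : ∀ B ∈ E, ∃ x ∈ L, ∀ z ∈ B, r z x) : ∃ x ∈ L, ∀ z ∈ ⋃ B ∈ E, B, r z x := by
  classical
  induction E using Finset.induction_on with
  | empty =>
    obtain ⟨x, hx⟩ := hL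
    exact ⟨x, hx, by simp⟩
  | insert B E _ ih =>
    obtain ⟨x₁, hx₁, hB⟩ := hE B (Finset.mem_insert_self B E)
    obtain ⟨x₂, hx₂, hE'⟩ := ih fun C hC => hE C (Finset.mem_insert_of_mem hC)
    simp only [Finset.set_biUnion_insert, Set.mem_union]
    rcases trichotomous_of r x₁ x₂ with h | rfl | h
    · exact ⟨x₂, hx₂, fun z hz => hz.elim (fun hz => _root_.trans (hB z hz) h) (hE' z)⟩
    · exact ⟨x₁, hx₁, fun z hz => hz.elim (hB z) (hE' z)⟩
    · exact ⟨x₁, hx₁, fun z hz => hz.elim (hB z) (fun hz => _root_.trans (hE' z hz) h)⟩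

section

variable {δ γ τ : Ordinal} {S : Ordinal → Set Ordinal}

lemma Lbelow_self : Lbelow δ γ γ = Lset δ γ := by
  refine Set.sep_eq_self_iff_mem_true.mpr fun z ⟨_, ⟨h0, α, hα, hz0⟩, _⟩ => ?_
  exact llt_of_take_eq_of_getElem_lt h0 (by simp) rfl (by simpa [hz0] using hα)

lemma singleton_pos_mem_Lset {α : Ordinal} (hα : α < γ) : [SOrd.pos α] ∈ Lset δ γ :=
  ⟨by simp, ⟨by simp, α, hα, rfl⟩, fun k h hk => by simp at h; omega⟩

lemma append_pos_zero_mem_Lset (hδ : δ ≠ 0) {z : List SOrd} (hz : z ∈ Lset δ γ) :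
    z ++ [SOrd.pos 0] ∈ Lset δ γ := by
  obtain ⟨hne, ⟨h0, α, hαγ, hz0⟩, hbetween⟩ := hz
  refine ⟨by simp, ⟨by simp, α, hαγ, by rwa [List.getElem_append_left h0]⟩, fun k hk hk0 => ?_⟩
  rcases lt_or_ge k z.length with hkz | hkz
  · rw [List.getElem_append_left hkz]
    exact hbetween k hkz hk0
  · obtain rfl : k = z.length := by simp at hk; omega
    simpa using ⟨SOrd.neg_lt_pos δ 0, SOrd.pos_lt_pos_iff.mpr (pos_iff_ne_zero.mpr hδ)⟩

lemma llt_append_pos_zero (z : List SOrd) : Llt z (z ++ [SOrd.pos 0]) :=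
  Or.inr (Or.inl ⟨by simp, by simp, by simpa using SOrd.isPos_pos 0⟩)

lemma IsBasic.subset_Lset {B : Set (List SOrd)} (hB : IsBasic δ γ τ S B) : B ⊆ Lset δ γ := by
  rcases hB with ⟨α, -, rfl⟩ | ⟨x, -, rfl⟩ | ⟨z, hz, rfl⟩
  · exact Set.sep_subset _ _
  · exact Set.sep_subset _ _
  · exact Set.singleton_subset_iff.mpr hz

lemma IsBasic.exists_subset_Lx (hδ : δ ≠ 0) {B : Set (List SOrd)} (hB : IsBasic δ γ τ S B)
    (hne : B ≠ Lset δ γ) : ∃ x ∈ Lset δ γ, B ⊆ Lx δ γ x := by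
  rcases hB with ⟨α, hαγ, rfl⟩ | ⟨x, hx, rfl⟩ | ⟨z, hz, rfl⟩
  · obtain hαγ | rfl := hαγ.lt_or_eq
    · exact ⟨_, singleton_pos_mem_Lset hαγ, subset_rfl⟩
    · exact absurd Lbelow_self hne
  · exact ⟨x, hx.1, fun z hz => ⟨hz.1, hz.2.2⟩⟩
  · exact ⟨_, append_pos_zero_mem_Lset hδ hz,
      Set.singleton_subset_iff.mpr ⟨hz, llt_append_pos_zero z⟩⟩

lemma subset_Lset_of_mem_Ifam {X : Set (List SOrd)} (hX : X ∈ Ifam δ γ τ S) : X ⊆ Lset δ γ := by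
  obtain ⟨E, hE, rfl⟩ := hX
  exact Set.iUnion₂_subset fun B hB => (hE B hB).subset_Lset

lemma exists_subset_Lx_of_mem_Ifam (hδ : δ ≠ 0) {X : Set (List SOrd)} (hX : X ∈ Ifam δ γ τ S)
    (hne : X ≠ Lset δ γ) : ∃ x ∈ Lset δ γ, X ⊆ Lx δ γ x := by
  have hsub := subset_Lset_of_mem_Ifam hX
  obtain ⟨E, hE, rfl⟩ := hX
  have hbounded : ∀ B ∈ E, ∃ x ∈ Lset δ γ, ∀ z ∈ B, Llt z x := by
    intro B hB
    have hBne : B ≠ Lset δ γ := fun h =>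
      hne (hsub.antisymm (h ▸ Set.subset_biUnion_of_mem (u := id) hB))
    obtain ⟨x, hx, hBx⟩ := (hE B hB).exists_subset_Lx hδ hBne
    exact ⟨x, hx, fun z hz => (hBx hz).2⟩
  obtain ⟨x, hx, hbound⟩ :=
    exists_rel_bound_biUnion (Set.nonempty_of_ssubset' (hsub.ssubset_of_ne hne)) E hbounded
  exact ⟨x, hx, fun z hz => ⟨hsub hz, hbound z hz⟩⟩

lemma Lset_mem_Ifam : Lset δ γ ∈ Ifam δ γ τ S :=
  ⟨{Lbelow δ γ γ}, fun B hB => Finset.mem_singleton.mp hB ▸ Or.inl ⟨γ, le_rfl, rfl⟩,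
    by simp [Lbelow_self]⟩

end

theorem Ifam_eq_union_Ix_general (δ γ τ : Ordinal) (hδ : δ ≠ 0)
    (S : Ordinal → Set Ordinal) :
    (∀ X ∈ Ifam δ γ τ S, X ≠ Lset δ γ →
        ∃ x ∈ Lset δ γ, X ⊆ Lx δ γ x ∧ X ∈ Ix δ γ τ S x) ∧
    Ifam δ γ τ S = {A | ∃ x ∈ Lset δ γ, A ∈ Ix δ γ τ S x} ∪ {Lset δ γ} := by
  have bounded : ∀ X ∈ Ifam δ γ τ S, X ≠ Lset δ γ →
      ∃ x ∈ Lset δ γ, X ⊆ Lx δ γ x ∧ X ∈ Ix δ γ τ S x := fun X hX hne =>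
    let ⟨x, hx, hXx⟩ := exists_subset_Lx_of_mem_Ifam hδ hX hne
    ⟨x, hx, hXx, hXx, hX⟩
  refine ⟨bounded, Set.ext fun A => ⟨fun hA => ?_, ?_⟩⟩
  · by_cases hAL : A = Lset δ γ
    · exact Or.inr hAL
    · obtain ⟨x, hx, -, hAx⟩ := bounded A hA hAL
      exact Or.inl ⟨x, hx, hAx⟩
  · rintro (⟨x, -, -, hA⟩ | rfl)
    exacts [hA, Lset_mem_Ifam]

/-- For every `X ∈ I^{Σ,γ}` with `X ≠ L^{δ,γ}` there is `x ∈ L^{δ,γ}` with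
`X ⊆ L^{δ,γ}_x`, hence `X ∈ I^{Σ,γ}_x`; i.e.
`I^{Σ,γ} = ⋃_{x ∈ L^{δ,γ}} I^{Σ,γ}_x ∪ {L^{δ,γ}}`. -/
theorem Ifam_eq_union_Ix (δ γ τ : Ordinal) (hδ : δ ≠ 0) (hγ : γ ≠ 0)
    (S : Ordinal → Set Ordinal) (hS : IsPartition δ τ S) :
    (∀ X ∈ Ifam δ γ τ S, X ≠ Lset δ γ →
        ∃ x ∈ Lset δ γ, X ⊆ Lx δ γ x ∧ X ∈ Ix δ γ τ S x) ∧
    Ifam δ γ τ S = {A | ∃ x ∈ Lset δ γ, A ∈ Ix δ γ τ S x} ∪ {Lset δ γ} :=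
  Ifam_eq_union_Ix_general δ γ τ hδ S
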